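/- arXiv:0804.3357 — 2 statements merged into one kernel-verified Lean document; each statement's English description precedes it below -/
import Mathlib

section
/- In the category A, Hom_A(cℚ, cℚ) is isomorphic as a ℚ-algebra to the ring of continuous functions from {∞} ∪ ℕ_{≥1} (one-point compactification of discrete ℕ_{≥1}) to discrete ℚ, i.e., to the ring of sequences (q_∞, q_1, q_2, ...) of rationals with q_k = q_∞ for all but finitely many k. -/
open scoped TensorProduct

universe u

variable {V W U : ℕ → Type u}
  [∀ k, AddCommGroup (V k)] [∀ k, Module ℚ (V k)]
  [∀ k, AddCommGroup (W k)] [∀ k, Module ℚ (W k)]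
  [∀ k, AddCommGroup (U k)] [∀ k, Module ℚ (U k)]

/-- The submodule of eventually-zero sequences in `∏ k, V k`. -/
def evZero (V : ℕ → Type u) [∀ k, AddCommGroup (V k)] [∀ k, Module ℚ (V k)] :
    Submodule ℚ (∀ k, V k) where
  carrier := {x | ∃ N, ∀ k, N ≤ k → x k = 0}
  add_mem' := by
    rintro x y ⟨N, hN⟩ ⟨M, hM⟩
    exact ⟨max N M, fun k hk => by
      simp [hN k (le_trans (le_max_left _ _) hk), hM k (le_trans (le_max_right _ _) hk)]⟩
  zero_mem' := ⟨0, fun k _ => rfl⟩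
  smul_mem' := by
    rintro c x ⟨N, hN⟩
    exact ⟨N, fun k hk => by simp [hN k hk]⟩

/-- `colim_n ∏_{k ≥ n} V_k`, realised concretely as the quotient of `∏ k, V k` by the
submodule of eventually-zero sequences. -/
def VEnd (V : ℕ → Type u) [∀ k, AddCommGroup (V k)] [∀ k, Module ℚ (V k)] : Type u :=
  (∀ k, V k) ⧸ evZero V

instance : AddCommGroup (VEnd V) := by unfold VEnd; infer_instance
instance : Module ℚ (VEnd V) := by unfold VEnd; infer_instance

/-- The class of a sequence in `VEnd V`. -/
def VEnd.mk : (∀ k, V k) →ₗ[ℚ] VEnd V := (evZero V).mkQ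

/-- The map induced on `VEnd` by a family of linear maps. -/
def endMap (f : ∀ k, V k →ₗ[ℚ] W k) : VEnd V →ₗ[ℚ] VEnd W :=
  Submodule.mapQ _ _ (LinearMap.pi fun k => (f k).comp (LinearMap.proj k))
    (by rintro x ⟨N, hN⟩; exact ⟨N, fun k hk => by simp [LinearMap.pi, hN k hk]⟩)

@[simp] lemma endMap_mk (f : ∀ k, V k →ₗ[ℚ] W k) (x : ∀ k, V k) :
    endMap f (VEnd.mk x) = VEnd.mk (fun k => f k (x k)) := rfl

@[simp] lemma endMap_id : endMap (fun k => (LinearMap.id : V k →ₗ[ℚ] V k)) = LinearMap.id := by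
  refine Submodule.linearMap_qext _ ?_
  ext x
  rfl

lemma endMap_comp (f : ∀ k, V k →ₗ[ℚ] W k) (g : ∀ k, W k →ₗ[ℚ] U k) :
    endMap (fun k => (g k).comp (f k)) = (endMap g).comp (endMap f) := by
  refine Submodule.linearMap_qext _ ?_
  ext x
  rfl

lemma endMap_add (f g : ∀ k, V k →ₗ[ℚ] W k) :
    endMap (fun k => f k + g k) = endMap f + endMap g := by
  refine Submodule.linearMap_qext _ ?_
  ext x
  show endMap _ (VEnd.mk x) = endMap f (VEnd.mk x) + endMap g (VEnd.mk x)
  simp only [endMap_mk]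
  rw [← map_add]
  rfl

lemma endMap_smul (c : ℚ) (f : ∀ k, V k →ₗ[ℚ] W k) :
    endMap (fun k => c • f k) = c • endMap f := by
  refine Submodule.linearMap_qext _ ?_
  ext x
  show endMap _ (VEnd.mk x) = c • endMap f (VEnd.mk x)
  simp only [endMap_mk]
  rw [← map_smul]
  rfl

lemma endMap_zero : endMap (fun k => (0 : V k →ₗ[ℚ] W k)) = 0 := by
  refine Submodule.linearMap_qext _ ?_
  ext x
  show endMap _ (VEnd.mk x) = 0
  simp only [endMap_mk]
  show VEnd.mk (fun _ => 0) = 0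
  rw [← map_zero (VEnd.mk (V := W))]
  rfl

/-- An object of the algebraic model `𝒜(𝒟)` (in the ungraded setting): a rational vector
space `Vinf` (the stalk at `∞`, with trivial `ℤ/2`-action), rational vector spaces `V k`
with a `ℤ/2`-action (given by the involution `w k`) for each `k`, and an equivariant
linear structure map `sig : Vinf → colim_n ∏_{k ≥ n} V k`. -/
structure AObj : Type (u + 1) where
  Vinf : Type u
  [addInf : AddCommGroup Vinf]
  [modInf : Module ℚ Vinf]
  V : ℕ → Type u
  [addV : ∀ k, AddCommGroup (V k)]
  [modV : ∀ k, Module ℚ (V k)]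
  w : ∀ k, V k →ₗ[ℚ] V k
  w_sq : ∀ k, (w k).comp (w k) = LinearMap.id
  sig : Vinf →ₗ[ℚ] VEnd V
  sig_w : (endMap w).comp sig = sig

attribute [instance] AObj.addInf AObj.modInf AObj.addV AObj.modV

/-- A morphism in the algebraic model: a linear map at `∞` and `ℤ/2`-equivariant linear
maps at each `k`, compatible with the structure maps. -/
@[ext] structure AHom (A B : AObj.{u}) : Type u where
  finf : A.Vinf →ₗ[ℚ] B.Vinf
  f : ∀ k, A.V k →ₗ[ℚ] B.V k
  equivar : ∀ k, (f k).comp (A.w k) = (B.w k).comp (f k)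
  comm : (endMap f).comp A.sig = B.sig.comp finf

open CategoryTheory

instance : Category AObj.{u} where
  Hom := AHom
  id A := ⟨LinearMap.id, fun _ => LinearMap.id, fun k => by simp, by simp⟩
  comp {A B C} f g :=
    ⟨g.finf.comp f.finf, fun k => (g.f k).comp (f.f k),
      fun k => by
        rw [LinearMap.comp_assoc, f.equivar k, ← LinearMap.comp_assoc, g.equivar k,
          LinearMap.comp_assoc],
      by
        rw [endMap_comp, LinearMap.comp_assoc, f.comm, ← LinearMap.comp_assoc, g.comm,
          LinearMap.comp_assoc]⟩
  id_comp f := by apply AHom.ext <;> rfl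
  comp_id f := by apply AHom.ext <;> rfl
  assoc f g h := by apply AHom.ext <;> rfl

@[simp] lemma AHom_id_f (A : AObj) (k : ℕ) : AHom.f (𝟙 A) k = LinearMap.id := rfl
@[simp] lemma AHom_id_finf (A : AObj) : AHom.finf (𝟙 A) = LinearMap.id := rfl
@[simp] lemma AHom_comp_f {A B C : AObj} (f : A ⟶ B) (g : B ⟶ C) (k : ℕ) :
    AHom.f (f ≫ g) k = (g.f k).comp (f.f k) := rfl
@[simp] lemma AHom_comp_finf {A B C : AObj} (f : A ⟶ B) (g : B ⟶ C) :
    AHom.finf (f ≫ g) = g.finf.comp f.finf := rfl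

/-- Addition of morphisms (the hom-sets of `𝒜(𝒟)` are `ℚ`-vector spaces). -/
instance (A B : AObj) : Add (AHom A B) :=
  ⟨fun f g =>
    ⟨f.finf + g.finf, fun k => f.f k + g.f k,
      fun k => by
        rw [LinearMap.add_comp, LinearMap.comp_add, f.equivar k, g.equivar k],
      by rw [endMap_add, LinearMap.add_comp, LinearMap.comp_add, f.comm, g.comm]⟩⟩

instance (A B : AObj) : Zero (AHom A B) :=
  ⟨⟨0, fun _ => 0, fun k => by simp, by rw [endMap_zero]; simp⟩⟩

instance (A B : AObj) : SMul ℚ (AHom A B) :=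
  ⟨fun c f =>
    ⟨c • f.finf, fun k => c • f.f k,
      fun k => by rw [LinearMap.smul_comp, LinearMap.comp_smul, f.equivar k],
      by rw [endMap_smul, LinearMap.smul_comp, LinearMap.comp_smul, f.comm]⟩⟩

instance (A B : AObj.{u}) : Add (A ⟶ B) := inferInstanceAs (Add (AHom A B))
instance (A B : AObj.{u}) : Zero (A ⟶ B) := inferInstanceAs (Zero (AHom A B))
instance (A B : AObj.{u}) : SMul ℚ (A ⟶ B) := inferInstanceAs (SMul ℚ (AHom A B))

open CategoryTheory Limits

/-- The stalk functor `p_k : 𝒜(𝒟) → ℚ-Mod` (forgetting the `ℤ/2`-action). -/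
@[simps] def pkFun (k : ℕ) : AObj.{u} ⥤ ModuleCat.{u} ℚ where
  obj A := ModuleCat.of ℚ (A.V k)
  map φ := ModuleCat.ofHom (φ.f k)

/-- The stalk-at-`∞` functor `p_∞ : 𝒜(𝒟) → ℚ-Mod`. -/
@[simps] def pinfFun : AObj.{u} ⥤ ModuleCat.{u} ℚ where
  obj A := ModuleCat.of ℚ A.Vinf
  map φ := ModuleCat.ofHom φ.finf

/-- The constant object `cM`: all stalks equal to `M` with trivial `ℤ/2`-action, and
structure map induced by the diagonal `M → ∏_k M`. -/
def cObj (M : Type u) [AddCommGroup M] [Module ℚ M] : AObj.{u} where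
  Vinf := M
  V _ := M
  w _ := LinearMap.id
  w_sq _ := by simp
  sig := VEnd.mk.comp (LinearMap.pi fun _ => LinearMap.id)
  sig_w := by rw [endMap_id]; simp

/-- `⊞_N V`, the pullback of `V_∞ → colim_n ∏_{k ≥ n} V_k ← ∏_{k ≥ N} V_k`, realised as
the submodule of `V_∞ × ∏_k V_k` of pairs `(v, x)` with `σ(v) = [x]` and `x k = 0` for
`k < N`.  (Stalks are indexed by `ℕ` starting at `0`, so the paper's `⊞_1` is `BoxPlus 0`
and the paper's `⊞_N` is `BoxPlus (N-1)`.) -/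
def BoxPlus (N : ℕ) (A : AObj.{u}) : Submodule ℚ (A.Vinf × ∀ k, A.V k) where
  carrier := {p | A.sig p.1 = VEnd.mk p.2 ∧ ∀ k < N, p.2 k = 0}
  add_mem' := by
    rintro p q ⟨hp, hp'⟩ ⟨hq, hq'⟩
    refine ⟨?_, fun k hk => by simp [hp' k hk, hq' k hk]⟩
    show A.sig (p.1 + q.1) = VEnd.mk (p.2 + q.2)
    rw [map_add, map_add, hp, hq]
  zero_mem' := by
    refine ⟨?_, fun k _ => rfl⟩
    show A.sig 0 = VEnd.mk 0
    simp
  smul_mem' := by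
    rintro c p ⟨hp, hp'⟩
    refine ⟨?_, fun k hk => by simp [hp' k hk]⟩
    show A.sig (c • p.1) = VEnd.mk (c • p.2)
    rw [map_smul, map_smul, hp]

/-- The ambient linear map underlying the induced map `⊞_N A → ⊞_N B` of a morphism. -/
def boxAmbient {A B : AObj.{u}} (φ : A ⟶ B) :
    (A.Vinf × ∀ k, A.V k) →ₗ[ℚ] (B.Vinf × ∀ k, B.V k) :=
  LinearMap.prodMap φ.finf (LinearMap.pi fun k => (φ.f k).comp (LinearMap.proj k))

lemma boxAmbient_mem {A B : AObj.{u}} (φ : A ⟶ B) (N : ℕ) {p : A.Vinf × ∀ k, A.V k}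
    (hp : p ∈ BoxPlus N A) : boxAmbient φ p ∈ BoxPlus N B := by
  obtain ⟨h1, h2⟩ := hp
  constructor
  · show B.sig (φ.finf p.1) = VEnd.mk fun k => φ.f k (p.2 k)
    have := congrArg (fun g => g p.1) φ.comm.symm
    simp only [LinearMap.comp_apply] at this
    rw [this, h1, endMap_mk]
  · intro k hk
    show φ.f k (p.2 k) = 0
    rw [h2 k hk, map_zero]

/-- The induced map `⊞_N A → ⊞_N B` of a morphism of `𝒜(𝒟)`. -/
def boxMap {A B : AObj.{u}} (φ : A ⟶ B) (N : ℕ) : BoxPlus N A →ₗ[ℚ] BoxPlus N B :=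
  (boxAmbient φ).restrict fun _ hp => boxAmbient_mem φ N hp

/-- The involution (`ℤ/2`-action) on `⊞_N A`. -/
def wBox (A : AObj.{u}) (N : ℕ) : BoxPlus N A →ₗ[ℚ] BoxPlus N A :=
  boxMap (show A ⟶ A from
    ⟨LinearMap.id, A.w, fun k => rfl, by
      rw [A.sig_w]; rfl⟩) N

/-- The `⊞_1 = BoxPlus 0` functor `𝒜(𝒟) → ℚ-Mod`. -/
@[simps] def box0Fun : AObj.{u} ⥤ ModuleCat.{u} ℚ where
  obj A := ModuleCat.of ℚ (BoxPlus 0 A)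
  map φ := ModuleCat.ofHom (boxMap φ 0)
  map_id A := by
    refine ModuleCat.hom_ext (LinearMap.ext fun p => ?_)
    apply Subtype.ext
    rfl
  map_comp f g := by
    refine ModuleCat.hom_ext (LinearMap.ext fun p => ?_)
    apply Subtype.ext
    rfl

/-- The submodule of `(v, x)` with all `x k` fixed by the involutions. -/
def fixCond (A : AObj.{u}) : Submodule ℚ (A.Vinf × ∀ k, A.V k) where
  carrier := {p | ∀ k, A.w k (p.2 k) = p.2 k}
  add_mem' := by
    intro p q hp hq k
    show A.w k (p.2 k + q.2 k) = _
    rw [map_add, hp k, hq k]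
    rfl
  zero_mem' := by
    intro k
    show A.w k 0 = 0
    simp
  smul_mem' := by
    intro c p hp k
    show A.w k (c • p.2 k) = _
    rw [map_smul, hp k]
    rfl

/-- `(⊞_N V)^{ℤ/2}`, the `ℤ/2`-fixed points of `⊞_N V`. -/
def BoxW (N : ℕ) (A : AObj.{u}) : Submodule ℚ (A.Vinf × ∀ k, A.V k) :=
  BoxPlus N A ⊓ fixCond A

lemma boxAmbient_memW {A B : AObj.{u}} (φ : A ⟶ B) (N : ℕ) {p : A.Vinf × ∀ k, A.V k}
    (hp : p ∈ BoxW N A) : boxAmbient φ p ∈ BoxW N B := by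
  refine ⟨boxAmbient_mem φ N hp.1, fun k => ?_⟩
  show B.w k (φ.f k (p.2 k)) = φ.f k (p.2 k)
  have := congrArg (fun g => g (p.2 k)) (φ.equivar k)
  simp only [LinearMap.comp_apply] at this
  rw [← this, hp.2 k]

/-- The map induced on `ℤ/2`-fixed points of `⊞_N`. -/
def boxWMap {A B : AObj.{u}} (φ : A ⟶ B) (N : ℕ) : BoxW N A →ₗ[ℚ] BoxW N B :=
  (boxAmbient φ).restrict fun _ hp => boxAmbient_memW φ N hp

/-- The functor `V ↦ (⊞_N V)^{ℤ/2}` from `𝒜(𝒟)` to `ℚ`-modules. -/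
@[simps] def boxWFun (N : ℕ) : AObj.{u} ⥤ ModuleCat.{u} ℚ where
  obj A := ModuleCat.of ℚ (BoxW N A)
  map φ := ModuleCat.ofHom (boxWMap φ N)
  map_id A := by
    refine ModuleCat.hom_ext (LinearMap.ext fun p => ?_)
    apply Subtype.ext
    rfl
  map_comp f g := by
    refine ModuleCat.hom_ext (LinearMap.ext fun p => ?_)
    apply Subtype.ext
    rfl

/-- The ambient map `(v, x) ↦ (v, x with coordinate N zeroed out)`. -/
def zeroAmbient (A : AObj.{u}) (N : ℕ) :
    (A.Vinf × ∀ k, A.V k) →ₗ[ℚ] (A.Vinf × ∀ k, A.V k) :=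
  LinearMap.prodMap LinearMap.id
    (LinearMap.pi fun k => if k = N then 0 else LinearMap.proj k)

lemma zeroAmbient_mem (A : AObj.{u}) (N : ℕ) {p : A.Vinf × ∀ k, A.V k}
    (hp : p ∈ BoxW N A) : zeroAmbient A N p ∈ BoxW (N + 1) A := by
  obtain ⟨⟨h1, h2⟩, h3⟩ := hp
  have hx : (zeroAmbient A N p).2 = fun k => if k = N then 0 else p.2 k := by
    funext k
    show (if k = N then (0 : (∀ j, A.V j) →ₗ[ℚ] A.V k) else LinearMap.proj k) p.2 = _
    split_ifs <;> rfl
  refine ⟨⟨?_, ?_⟩, ?_⟩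
  · show A.sig p.1 = VEnd.mk (zeroAmbient A N p).2
    rw [h1, hx]
    show Submodule.Quotient.mk _ = Submodule.Quotient.mk _
    rw [Submodule.Quotient.eq]
    exact ⟨N + 1, fun k hk => by
      have : k ≠ N := by omega
      simp [this]⟩
  · intro k hk
    rw [hx]
    by_cases h : k = N
    · simp [h]
    · have : k < N := by omega
      simp [h, h2 k this]
  · intro k
    rw [hx]
    by_cases h : k = N
    · simp [h]
    · simpa [h] using h3 k

/-- The natural transformation `(⊞_N)^{ℤ/2} ⟶ (⊞_{N+1})^{ℤ/2}` which zeroes out the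
coordinate `N`. -/
@[simps] def zeroNatTrans (N : ℕ) : boxWFun.{u} N ⟶ boxWFun.{u} (N + 1) where
  app A := ModuleCat.ofHom ((zeroAmbient A N).restrict fun _ hp => zeroAmbient_mem A N hp)
  naturality A B φ := by
    refine ModuleCat.hom_ext (LinearMap.ext fun p => ?_)
    obtain ⟨⟨v, x⟩, hp⟩ := p
    apply Subtype.ext
    apply Prod.ext
    · rfl
    · funext k
      show (if k = N then (0 : (∀ j, B.V j) →ₗ[ℚ] B.V k) else LinearMap.proj k)
          (fun j => φ.f j (x j)) =
        φ.f k ((if k = N then (0 : (∀ j, A.V j) →ₗ[ℚ] A.V k) else LinearMap.proj k) x)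
      split_ifs <;> simp

/-- The `ℚ`-algebra of "eventually constant" sequences `(q_∞, q_1, q_2, ...)` of
rationals with `q_k = q_∞` for all but finitely many `k`; equivalently, the ring of
continuous functions from the one-point compactification of the discrete natural numbers
to discrete `ℚ`. -/
def S13 : Subalgebra ℚ (ℚ × (ℕ → ℚ)) where
  carrier := {p | {n | p.2 n ≠ p.1}.Finite}
  add_mem' := by
    intro a b ha hb
    refine ((ha.union hb).subset ?_ : _)
    intro n hn
    simp only [Set.mem_setOf_eq, Set.mem_union] at hn ⊢
    by_contra hc
    push_neg at hc
    exact hn (by simp [hc.1, hc.2])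
  mul_mem' := by
    intro a b ha hb
    refine ((ha.union hb).subset ?_ : _)
    intro n hn
    simp only [Set.mem_setOf_eq, Set.mem_union] at hn ⊢
    by_contra hc
    push_neg at hc
    exact hn (by simp [hc.1, hc.2])
  algebraMap_mem' := by
    intro q
    simp [Algebra.algebraMap_eq_smul_one]

/-!
A `ℚ`-linear map `ℚ → ℚ` is multiplication by its value at `1`, and equivariance is automatic
for the trivial `ℤ/2`-actions, so an endomorphism of `cℚ` is a family of scalars
`(f_∞, f_k)`. Since `colim_n ∏_{k ≥ n}` identifies sequences that eventually agree,
compatibility with the diagonal structure map says exactly that `f_k = f_∞` for large `k`.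
-/

open Filter

lemma VEnd.mk_eq_mk_iff (x y : ∀ k, V k) :
    VEnd.mk x = VEnd.mk y ↔ ∀ᶠ k in atTop, x k = y k := by
  show Submodule.Quotient.mk x = Submodule.Quotient.mk y ↔ _
  rw [Submodule.Quotient.eq, eventually_atTop]
  exact exists_congr fun N => forall₂_congr fun k _ => sub_eq_zero

lemma mem_S13_iff (p : ℚ × (ℕ → ℚ)) : p ∈ S13 ↔ ∀ᶠ k in atTop, p.2 k = p.1 := by
  rw [← Nat.cofinite_eq_atTop, eventually_cofinite]
  rfl

section ConstantObject

variable {M N : Type u} [AddCommGroup M] [Module ℚ M] [AddCommGroup N] [Module ℚ N]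

/- `(cObj M).Vinf` is not reducibly `M`, so the components are retyped to let numerals and
instances on `M` elaborate. -/
def AHom.cObjInf (φ : cObj M ⟶ cObj N) : M →ₗ[ℚ] N := φ.finf

def AHom.cObjStalk (φ : cObj M ⟶ cObj N) (k : ℕ) : M →ₗ[ℚ] N := φ.f k

lemma AHom.eventually_cObjStalk_eq_cObjInf (φ : cObj M ⟶ cObj N) (v : M) :
    ∀ᶠ k in atTop, φ.cObjStalk k v = φ.cObjInf v :=
  (VEnd.mk_eq_mk_iff (V := fun _ => N) _ _).1 (LinearMap.congr_fun φ.comm v)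

def cObjHomOfScalars (a : ℚ) (q : ℕ → ℚ) (h : ∀ᶠ k in atTop, q k = a) : cObj M ⟶ cObj M where
  finf := (a • LinearMap.id : M →ₗ[ℚ] M)
  f k := (q k • LinearMap.id : M →ₗ[ℚ] M)
  equivar _ := rfl
  comm := LinearMap.ext fun v => (VEnd.mk_eq_mk_iff (V := fun _ => M) _ _).2 <|
    h.mono fun k hk => by
      change (q k • v : M) = a • v
      rw [hk]

end ConstantObject

lemma LinearMap.comp_apply_one {R : Type*} [CommSemiring R] (f g : R →ₗ[R] R) :
    g.comp f 1 = f 1 * g 1 := by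
  rw [LinearMap.comp_apply, ← smul_eq_mul, ← map_smul, smul_eq_mul, mul_one]

def cObjEndEquiv : (cObj ℚ ⟶ cObj ℚ) ≃ S13 where
  toFun φ := ⟨(φ.cObjInf 1, fun k => φ.cObjStalk k 1),
    (mem_S13_iff _).2 (φ.eventually_cObjStalk_eq_cObjInf 1)⟩
  invFun p := cObjHomOfScalars p.1.1 p.1.2 ((mem_S13_iff _).1 p.2)
  left_inv φ := AHom.ext (LinearMap.ext_ring (mul_one (φ.cObjInf 1)))
    (funext fun k => LinearMap.ext_ring (mul_one (φ.cObjStalk k 1)))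
  right_inv _ := Subtype.ext (Prod.ext (mul_one _) (funext fun _ => mul_one _))

/-- the endomorphism ring `Hom_𝒜(cℚ, cℚ)` is isomorphic, as a
`ℚ`-algebra, to the ring of sequences `(q_∞, q_1, q_2, ...)` of rationals with
`q_k = q_∞` for all but finitely many `k` (the ring of continuous functions from the
one-point compactification of the discrete naturals to discrete `ℚ`). -/
theorem statement13 :
    ∃ e : (cObj ℚ ⟶ cObj ℚ) ≃ S13,
      e (𝟙 (cObj ℚ)) = 1 ∧
      (∀ f g : cObj ℚ ⟶ cObj ℚ, e (f ≫ g) = e f * e g) ∧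
      (∀ f g : cObj ℚ ⟶ cObj ℚ, e (f + g) = e f + e g) ∧
      (∀ (c : ℚ) (f : cObj ℚ ⟶ cObj ℚ), e (c • f) = c • e f) := by
  refine ⟨cObjEndEquiv, rfl, fun f g => ?_, fun f g => ?_, fun c f => ?_⟩
  · exact Subtype.ext (Prod.ext (LinearMap.comp_apply_one f.cObjInf g.cObjInf)
      (funext fun k => LinearMap.comp_apply_one (f.cObjStalk k) (g.cObjStalk k)))
  · exact Subtype.ext (Prod.ext rfl rfl)
  · exact Subtype.ext (Prod.ext rfl rfl)
end

section
/- Define a tensor product on A by (A ⊗ B)_k = A_k ⊗_ℚ B_k (with diagonal ℤ/2-action), (A ⊗ B)_∞ = A_∞ ⊗_ℚ B_∞, with structure map the composite A_∞ ⊗ B_∞ → (colim_n ∏_{k≥n} A_k) ⊗ (colim_n ∏_{k≥n} B_k) ≅ colim_n (∏_{k≥n} A_k ⊗ ∏_{k≥n} B_k) → colim_n ∏_{k≥n} (A_k ⊗ B_k). Then ⊗ makes A a symmetric monoidal category with unit cℚ. -/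
open scoped TensorProduct

universe u

variable {V W U : ℕ → Type u}
  [∀ k, AddCommGroup (V k)] [∀ k, Module ℚ (V k)]
  [∀ k, AddCommGroup (W k)] [∀ k, Module ℚ (W k)]
  [∀ k, AddCommGroup (U k)] [∀ k, Module ℚ (U k)]

open CategoryTheory

open CategoryTheory Limits

/-! ### Tensor products -/

/-- The bilinear map `∏ V × ∏ W → ∏ (V ⊗ W)`. -/
noncomputable def tmulPi (x : ∀ k, V k) : (∀ k, W k) →ₗ[ℚ] ∀ k, (V k ⊗[ℚ] W k) :=
  LinearMap.pi fun k => (TensorProduct.mk ℚ (V k) (W k) (x k)).comp (LinearMap.proj k)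

/-- `tmulPi` as a linear map in the first variable. -/
noncomputable def tmulPiL : (∀ k, V k) →ₗ[ℚ] (∀ k, W k) →ₗ[ℚ] ∀ k, (V k ⊗[ℚ] W k) where
  toFun := tmulPi
  map_add' x x' := by
    refine LinearMap.ext fun y => funext fun k => ?_
    show (x k + x' k) ⊗ₜ[ℚ] y k = x k ⊗ₜ[ℚ] y k + x' k ⊗ₜ[ℚ] y k
    rw [TensorProduct.add_tmul]
  map_smul' c x := by
    refine LinearMap.ext fun y => funext fun k => ?_
    show (c • x k) ⊗ₜ[ℚ] y k = c • (x k ⊗ₜ[ℚ] y k)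
    rw [TensorProduct.smul_tmul']

/-- `x ↦ ([y] ↦ [k ↦ x k ⊗ y k])`, before descending in `x`. -/
noncomputable def innerEnd (x : ∀ k, V k) : VEnd W →ₗ[ℚ] VEnd (fun k => V k ⊗[ℚ] W k) :=
  Submodule.liftQ (evZero W) (VEnd.mk.comp (tmulPi x))
    (by
      rintro y ⟨N, hN⟩
      rw [LinearMap.mem_ker]
      show VEnd.mk (tmulPi x y) = 0
      show Submodule.Quotient.mk _ = 0
      rw [Submodule.Quotient.mk_eq_zero]
      exact ⟨N, fun k hk => by
        show x k ⊗ₜ[ℚ] y k = 0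
        rw [hN k hk, TensorProduct.tmul_zero]⟩)

/-- `innerEnd` as a linear map in `x`. -/
noncomputable def innerEndL : (∀ k, V k) →ₗ[ℚ] VEnd W →ₗ[ℚ] VEnd (fun k => V k ⊗[ℚ] W k) where
  toFun := innerEnd
  map_add' x x' := by
    refine Submodule.linearMap_qext _ (LinearMap.ext fun y => ?_)
    show VEnd.mk (tmulPi (x + x') y) = VEnd.mk (tmulPi x y) + VEnd.mk (tmulPi x' y)
    rw [show tmulPi (x + x') y = tmulPi x y + tmulPi x' y from
      funext fun k => TensorProduct.add_tmul _ _ _, map_add]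
  map_smul' c x := by
    refine Submodule.linearMap_qext _ (LinearMap.ext fun y => ?_)
    show VEnd.mk (tmulPi (c • x) y) = c • VEnd.mk (tmulPi x y)
    rw [show tmulPi (c • x) y = c • tmulPi x y from
      funext fun k => (TensorProduct.smul_tmul' _ _ _).symm, map_smul]

/-- The bilinear map `VEnd V × VEnd W → VEnd (V ⊗ W)`,
`([x], [y]) ↦ [k ↦ x k ⊗ y k]`. -/
noncomputable def endTmul : VEnd V →ₗ[ℚ] VEnd W →ₗ[ℚ] VEnd (fun k => V k ⊗[ℚ] W k) :=
  Submodule.liftQ (evZero V) innerEndL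
    (by
      rintro x ⟨N, hN⟩
      rw [LinearMap.mem_ker]
      refine Submodule.linearMap_qext _ (LinearMap.ext fun y => ?_)
      show VEnd.mk (tmulPi x y) = 0
      show Submodule.Quotient.mk _ = 0
      rw [Submodule.Quotient.mk_eq_zero]
      exact ⟨N, fun k hk => by
        show x k ⊗ₜ[ℚ] y k = 0
        rw [hN k hk, TensorProduct.zero_tmul]⟩)

@[simp] lemma endTmul_mk_mk (x : ∀ k, V k) (y : ∀ k, W k) :
    endTmul (VEnd.mk x) (VEnd.mk y) = VEnd.mk (fun k => x k ⊗ₜ[ℚ] y k) := rfl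

lemma endTmul_natural {V' W' : ℕ → Type u}
    [∀ k, AddCommGroup (V' k)] [∀ k, Module ℚ (V' k)]
    [∀ k, AddCommGroup (W' k)] [∀ k, Module ℚ (W' k)]
    (f : ∀ k, V k →ₗ[ℚ] V' k) (g : ∀ k, W k →ₗ[ℚ] W' k)
    (a : VEnd V) (b : VEnd W) :
    endMap (fun k => TensorProduct.map (f k) (g k)) (endTmul a b) =
      endTmul (endMap f a) (endMap g b) := by
  obtain ⟨x, rfl⟩ := Submodule.Quotient.mk_surjective _ a
  obtain ⟨y, rfl⟩ := Submodule.Quotient.mk_surjective _ b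
  rfl

/-- The tensor product in `𝒜(𝒟)`: stalk-wise tensor product `(A ⊗ B)_k = A_k ⊗ B_k`
(with diagonal `ℤ/2`-action), `(A ⊗ B)_∞ = A_∞ ⊗ B_∞`, with the structure map obtained
from the two structure maps together with the canonical map
`(colim_n ∏ A_k) ⊗ (colim_n ∏ B_k) → colim_n ∏ (A_k ⊗ B_k)`. -/
noncomputable def tensorObjA (A B : AObj.{u}) : AObj.{u} where
  Vinf := A.Vinf ⊗[ℚ] B.Vinf
  V k := A.V k ⊗[ℚ] B.V k
  w k := TensorProduct.map (A.w k) (B.w k)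
  w_sq k := by
    rw [← TensorProduct.map_comp, A.w_sq, B.w_sq]
    exact TensorProduct.map_id
  sig := (TensorProduct.lift endTmul).comp (TensorProduct.map A.sig B.sig)
  sig_w := by
    apply TensorProduct.ext'
    intro a b
    show endMap _ (TensorProduct.lift endTmul (A.sig a ⊗ₜ[ℚ] B.sig b)) =
      TensorProduct.lift endTmul (A.sig a ⊗ₜ[ℚ] B.sig b)
    rw [TensorProduct.lift.tmul]
    rw [endTmul_natural A.w B.w (A.sig a) (B.sig b)]
    have ha : endMap A.w (A.sig a) = A.sig a := congrArg (fun h => h a) A.sig_w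
    have hb : endMap B.w (B.sig b) = B.sig b := congrArg (fun h => h b) B.sig_w
    rw [ha, hb]

/-! Every piece of structure is the usual tensor-product isomorphism of `ℚ`-vector spaces,
applied at `∞` and in each stalk. It is compatible with the structure maps because the
pairing `colim ∏ A_k ⊗ colim ∏ B_k → colim ∏ (A_k ⊗ B_k)` is computed termwise on
representing sequences, so it inherits associativity, symmetry and unitality from the
stalks. A morphism is determined by its components, so every coherence axiom can be checked
on pure tensors, where both sides reduce to the same tensor. -/

lemma VEnd.mk_surjective : Function.Surjective (VEnd.mk : (∀ k, V k) →ₗ[ℚ] VEnd V) :=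
  Submodule.mkQ_surjective _

lemma endTmul_assoc (a : VEnd V) (b : VEnd W) (c : VEnd U) :
    endMap (fun k => (TensorProduct.assoc ℚ (V k) (W k) (U k)).toLinearMap)
      (endTmul (endTmul a b) c) = endTmul a (endTmul b c) := by
  obtain ⟨x, rfl⟩ := VEnd.mk_surjective a
  obtain ⟨y, rfl⟩ := VEnd.mk_surjective b
  obtain ⟨z, rfl⟩ := VEnd.mk_surjective c
  rfl

lemma endTmul_comm (a : VEnd V) (b : VEnd W) :
    endMap (fun k => (TensorProduct.comm ℚ (V k) (W k)).toLinearMap) (endTmul a b) =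
      endTmul b a := by
  obtain ⟨x, rfl⟩ := VEnd.mk_surjective a
  obtain ⟨y, rfl⟩ := VEnd.mk_surjective b
  rfl

lemma endTmul_const_left {X : ℕ → Type} [∀ k, AddCommGroup (X k)] [∀ k, Module ℚ (X k)]
    (q : ℚ) (b : VEnd X) :
    endMap (fun k => (TensorProduct.lid ℚ (X k)).toLinearMap)
      (endTmul (V := fun _ => ℚ) (VEnd.mk fun _ => q) b) = q • b := by
  obtain ⟨y, rfl⟩ := VEnd.mk_surjective b
  exact map_smul VEnd.mk q y

lemma endTmul_const_right {X : ℕ → Type} [∀ k, AddCommGroup (X k)] [∀ k, Module ℚ (X k)]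
    (q : ℚ) (b : VEnd X) :
    endMap (fun k => (TensorProduct.rid ℚ (X k)).toLinearMap)
      (endTmul (W := fun _ => ℚ) b (VEnd.mk fun _ => q)) = q • b := by
  obtain ⟨y, rfl⟩ := VEnd.mk_surjective b
  exact map_smul VEnd.mk q y

namespace AObj

lemma hom_ext {A B : AObj.{u}} {φ ψ : A ⟶ B} (hinf : φ.finf = ψ.finf)
    (h : ∀ k, φ.f k = ψ.f k) : φ = ψ :=
  AHom.ext hinf (funext h)

noncomputable def tensorHom {A A' B B' : AObj.{u}} (f : A ⟶ A') (g : B ⟶ B') :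
    tensorObjA A B ⟶ tensorObjA A' B' where
  finf := TensorProduct.map f.finf g.finf
  f k := TensorProduct.map (f.f k) (g.f k)
  equivar k := by
    change (TensorProduct.map (f.f k) (g.f k)).comp (TensorProduct.map (A.w k) (B.w k)) =
      (TensorProduct.map (A'.w k) (B'.w k)).comp (TensorProduct.map (f.f k) (g.f k))
    rw [← TensorProduct.map_comp, ← TensorProduct.map_comp, f.equivar, g.equivar]
  comm := TensorProduct.ext' fun a b => by
    change endMap _ (endTmul (A.sig a) (B.sig b)) = endTmul (A'.sig (f.finf a)) (B'.sig (g.finf b))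
    rw [endTmul_natural, ← LinearMap.comp_apply (endMap f.f), f.comm,
      ← LinearMap.comp_apply (endMap g.f), g.comm]
    rfl

noncomputable def isoMk {A B : AObj.{u}} (einf : A.Vinf ≃ₗ[ℚ] B.Vinf)
    (e : ∀ k, A.V k ≃ₗ[ℚ] B.V k)
    (equivar : ∀ k, (e k).toLinearMap.comp (A.w k) = (B.w k).comp (e k).toLinearMap)
    (comm : (endMap fun k => (e k).toLinearMap).comp A.sig = B.sig.comp einf.toLinearMap) :
    A ≅ B where
  hom := ⟨einf, fun k => e k, equivar, comm⟩
  inv :=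
    { finf := einf.symm
      f := fun k => (e k).symm
      equivar := fun k => by
        rw [LinearEquiv.eq_comp_toLinearMap_symm, LinearMap.comp_assoc, ← equivar,
          ← LinearMap.comp_assoc, LinearEquiv.symm_comp, LinearMap.id_comp]
      comm := by
        rw [LinearEquiv.eq_comp_toLinearMap_symm, LinearMap.comp_assoc, ← comm,
          ← LinearMap.comp_assoc, ← endMap_comp]
        simp only [LinearEquiv.symm_comp, endMap_id, LinearMap.id_comp] }
  hom_inv_id := hom_ext einf.symm_comp fun k => (e k).symm_comp
  inv_hom_id := hom_ext einf.comp_symm fun k => (e k).comp_symm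

noncomputable def associator (A B C : AObj.{u}) :
    tensorObjA (tensorObjA A B) C ≅ tensorObjA A (tensorObjA B C) :=
  isoMk (TensorProduct.assoc ℚ A.Vinf B.Vinf C.Vinf)
    (fun k => TensorProduct.assoc ℚ (A.V k) (B.V k) (C.V k))
    (fun _ => TensorProduct.ext_threefold fun _ _ _ => rfl)
    (TensorProduct.ext_threefold fun a b c => endTmul_assoc (A.sig a) (B.sig b) (C.sig c))

noncomputable def braiding (A B : AObj.{u}) : tensorObjA A B ≅ tensorObjA B A :=
  isoMk (TensorProduct.comm ℚ A.Vinf B.Vinf) (fun k => TensorProduct.comm ℚ (A.V k) (B.V k))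
    (fun _ => TensorProduct.ext' fun _ _ => rfl)
    (TensorProduct.ext' fun a b => endTmul_comm (A.sig a) (B.sig b))

-- The ascriptions `(q : ℚ)` retype elements of the stalks of `cObj ℚ`, so that `q • _`
-- elaborates.
noncomputable def leftUnitor (A : AObj.{0}) : tensorObjA (cObj ℚ) A ≅ A :=
  isoMk (TensorProduct.lid ℚ A.Vinf) (fun k => TensorProduct.lid ℚ (A.V k))
    (fun k => TensorProduct.ext' fun (q : ℚ) y => (map_smul (A.w k) q y).symm)
    (TensorProduct.ext' fun (q : ℚ) a => by
      change endMap _ (endTmul (V := fun _ => ℚ) (VEnd.mk fun _ => q) (A.sig a)) = A.sig (q • a)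
      rw [map_smul, endTmul_const_left])

noncomputable def rightUnitor (A : AObj.{0}) : tensorObjA A (cObj ℚ) ≅ A :=
  isoMk (TensorProduct.rid ℚ A.Vinf) (fun k => TensorProduct.rid ℚ (A.V k))
    (fun k => TensorProduct.ext' fun y (q : ℚ) => (map_smul (A.w k) q y).symm)
    (TensorProduct.ext' fun a (q : ℚ) => by
      change endMap _ (endTmul (W := fun _ => ℚ) (A.sig a) (VEnd.mk fun _ => q)) = A.sig (q • a)
      rw [map_smul, endTmul_const_right])

noncomputable instance : MonoidalCategoryStruct AObj.{0} where
  tensorObj := tensorObjA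
  whiskerLeft A _ _ g := tensorHom (𝟙 A) g
  whiskerRight f B := tensorHom f (𝟙 B)
  tensorHom := tensorHom
  tensorUnit := cObj ℚ
  associator := associator
  leftUnitor := leftUnitor
  rightUnitor := rightUnitor

noncomputable instance : MonoidalCategory AObj.{0} :=
  .ofTensorHom
    (id_tensorHom_id := fun _ _ =>
      hom_ext (TensorProduct.ext' fun _ _ => rfl) fun _ => TensorProduct.ext' fun _ _ => rfl)
    (id_tensorHom := fun _ {_ _} _ => rfl)
    (tensorHom_id := fun _ _ => rfl)
    (tensorHom_comp_tensorHom := fun _ _ _ _ =>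
      hom_ext (TensorProduct.ext' fun _ _ => rfl) fun _ => TensorProduct.ext' fun _ _ => rfl)
    (associator_naturality := fun _ _ _ =>
      hom_ext (TensorProduct.ext_threefold fun _ _ _ => rfl)
        fun _ => TensorProduct.ext_threefold fun _ _ _ => rfl)
    (leftUnitor_naturality := fun f =>
      hom_ext (TensorProduct.ext' fun (q : ℚ) x => (map_smul f.finf q x).symm)
        fun k => TensorProduct.ext' fun (q : ℚ) x => (map_smul (f.f k) q x).symm)
    (rightUnitor_naturality := fun f =>
      hom_ext (TensorProduct.ext' fun x (q : ℚ) => (map_smul f.finf q x).symm)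
        fun k => TensorProduct.ext' fun x (q : ℚ) => (map_smul (f.f k) q x).symm)
    (pentagon := fun _ _ _ _ =>
      hom_ext (TensorProduct.ext_fourfold fun _ _ _ _ => rfl)
        fun _ => TensorProduct.ext_fourfold fun _ _ _ _ => rfl)
    (triangle := fun _ _ =>
      hom_ext (TensorProduct.ext_threefold fun x (q : ℚ) y =>
          (TensorProduct.smul_tmul q x y).symm)
        fun _ => TensorProduct.ext_threefold fun x (q : ℚ) y =>
          (TensorProduct.smul_tmul q x y).symm)

noncomputable instance : SymmetricCategory AObj.{0} where
  braiding := braiding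
  braiding_naturality_right _ _ _ _ :=
    hom_ext (TensorProduct.ext' fun _ _ => rfl) fun _ => TensorProduct.ext' fun _ _ => rfl
  braiding_naturality_left _ _ :=
    hom_ext (TensorProduct.ext' fun _ _ => rfl) fun _ => TensorProduct.ext' fun _ _ => rfl
  hexagon_forward _ _ _ :=
    hom_ext (TensorProduct.ext_threefold fun _ _ _ => rfl)
      fun _ => TensorProduct.ext_threefold fun _ _ _ => rfl
  hexagon_reverse _ _ _ :=
    hom_ext (TensorProduct.ext_threefold' fun _ _ _ => rfl)
      fun _ => TensorProduct.ext_threefold' fun _ _ _ => rfl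
  symmetry _ _ :=
    hom_ext (TensorProduct.ext' fun _ _ => rfl) fun _ => TensorProduct.ext' fun _ _ => rfl

end AObj

/-- the stalk-wise tensor product (`(A ⊗ B)_k = A_k ⊗ B_k` with diagonal
`ℤ/2`-action, `(A ⊗ B)_∞ = A_∞ ⊗ B_∞`, structure map the composite through
`colim_n ∏ (A_k ⊗ B_k)`) makes `𝒜(𝒟)` a symmetric monoidal category with unit `cℚ`. -/
theorem statement15 :
    ∃ inst : MonoidalCategory AObj.{0},
      inst.tensorObj = tensorObjA ∧
      inst.tensorUnit = cObj ℚ ∧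
      Nonempty (@SymmetricCategory AObj.{0} _ inst) :=
  ⟨inferInstance, rfl, rfl, ⟨inferInstance⟩⟩
end
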